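/- arXiv:2312.08273 — 2 statements merged into one kernel-verified Lean document; each statement's English description precedes it below -/
import Mathlib

section
/- For the king's graph and n ≥ 2, the number of staircase words over [k] with first column (i+1,i) (for 1 ≤ i ≤ k-1) satisfies: s_k(KG_{2,n}, i+1, i) = s_k(KG_{2,n-1}, i, i) + 2·s_k(KG_{2,n-1}, i+1, i) + s_k(KG_{2,n-1}, i+1, i+1). -/
/-- A word `w` on vertex type `V` (values in `Fin k`, thought of as `1..k`)
is *staircase* w.r.t. an adjacency relation if adjacent vertices get values
differing by at most 1. -/
def IsStaircase {V : Type*} (Adj : V → V → Prop) {k : ℕ} (w : V → Fin k) : Prop :=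
  ∀ u v, Adj u v → |(w u : ℤ) - (w v : ℤ)| ≤ 1

/-- Adjacency of the grid graph `P_2 × P_n` on `{1,2} × {1,...,n}`. -/
def gridAdj {n : ℕ} (u v : Fin 2 × Fin n) : Prop :=
  |(u.1 : ℤ) - (v.1 : ℤ)| + |(u.2 : ℤ) - (v.2 : ℤ)| = 1

/-- Adjacency of the rectangle-triangular graph `RT_{2,n}`. -/
def rtAdj {n : ℕ} (u v : Fin 2 × Fin n) : Prop :=
  gridAdj u v ∨ (u.1 = 0 ∧ v.1 = 1 ∧ (v.2 : ℤ) = (u.2 : ℤ) + 1)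
    ∨ (u.1 = 1 ∧ v.1 = 0 ∧ (v.2 : ℤ) = (u.2 : ℤ) - 1)

/-- Adjacency of the king's graph `KG_{2,n}`. -/
def kingAdj {n : ℕ} (u v : Fin 2 × Fin n) : Prop :=
  u ≠ v ∧ |(u.1 : ℤ) - (v.1 : ℤ)| ≤ 1 ∧ |(u.2 : ℤ) - (v.2 : ℤ)| ≤ 1

/-- `scount k n Adj` is the number of staircase words over alphabet `[k]`
on the `2 × n` vertex set with adjacency `Adj`. -/
noncomputable def scount (k n : ℕ) (Adj : Fin 2 × Fin n → Fin 2 × Fin n → Prop) : ℕ :=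
  Nat.card {w : Fin 2 × Fin n → Fin k // IsStaircase Adj w}

/-- `scountIJ k n Adj i j` is the number of staircase words over `[k]` on the
`2 × (n+1)` vertex set whose first column is `(i, j)` (values `1`-based;
it is `0` if `i` or `j` lies outside `{1,...,k}`). -/
noncomputable def scountIJ (k n : ℕ) (Adj : Fin 2 × Fin (n + 1) → Fin 2 × Fin (n + 1) → Prop)
    (i j : ℕ) : ℕ :=
  Nat.card {w : Fin 2 × Fin (n + 1) → Fin k //
    IsStaircase Adj w ∧ ((w (0, 0) : ℕ) + 1 = i) ∧ ((w (1, 0) : ℕ) + 1 = j)}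

/- ### auxiliary -/

lemma king_char {k m : ℕ} (w : Fin 2 × Fin m → Fin k) :
    IsStaircase kingAdj w ↔ ∀ u v : Fin 2 × Fin m, u ≠ v →
      (u.2 : ℕ) ≤ (v.2 : ℕ) + 1 → (v.2 : ℕ) ≤ (u.2 : ℕ) + 1 →
      ((w u : ℕ) ≤ (w v : ℕ) + 1 ∧ (w v : ℕ) ≤ (w u : ℕ) + 1) := by
  unfold IsStaircase kingAdj
  constructor
  · intro h u v h1 h2 h3
    have hu := u.1.isLt; have hv := v.1.isLt
    have := h u v ⟨h1, by rw [abs_sub_le_iff]; constructor <;> omega,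
      by rw [abs_sub_le_iff]; constructor <;> omega⟩
    rw [abs_sub_le_iff] at this; omega
  · intro h u v hadj
    obtain ⟨h1, _, h3⟩ := hadj
    rw [abs_sub_le_iff] at h3 ⊢
    have := h u v h1 (by omega) (by omega)
    omega

def dropw {k n : ℕ} (w : Fin 2 × Fin (n + 2) → Fin k) : Fin 2 × Fin (n + 1) → Fin k :=
  fun p => w (p.1, ⟨(p.2 : ℕ) + 1, by have := p.2.isLt; omega⟩)

def extw {k n : ℕ} (x y : Fin k) (w : Fin 2 × Fin (n + 1) → Fin k) :
    Fin 2 × Fin (n + 2) → Fin k :=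
  fun p => if (p.2 : ℕ) = 0 then (if (p.1 : ℕ) = 0 then x else y)
    else w (p.1, ⟨(p.2 : ℕ) - 1, by have := p.2.isLt; omega⟩)

lemma extw_col0 {k n : ℕ} (x y : Fin k) (w : Fin 2 × Fin (n + 1) → Fin k)
    (r : Fin 2) (c : Fin (n + 2)) (hc : (c : ℕ) = 0) :
    extw x y w (r, c) = if (r : ℕ) = 0 then x else y := by
  simp [extw, hc]

lemma extw_col {k n : ℕ} (x y : Fin k) (w : Fin 2 × Fin (n + 1) → Fin k)
    (r : Fin 2) (c : Fin (n + 2)) (hc : (c : ℕ) ≠ 0) :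
    extw x y w (r, c) = w (r, ⟨(c : ℕ) - 1, by have := c.isLt; omega⟩) := by
  simp [extw, hc]

lemma dropw_staircase {k n : ℕ} {w : Fin 2 × Fin (n + 2) → Fin k}
    (hw : IsStaircase kingAdj w) : IsStaircase kingAdj (dropw w) := by
  rw [king_char] at hw ⊢
  rintro ⟨u1, u2⟩ ⟨v1, v2⟩ h1 h2 h3
  replace h2 : (u2 : ℕ) ≤ (v2 : ℕ) + 1 := h2
  replace h3 : (v2 : ℕ) ≤ (u2 : ℕ) + 1 := h3
  refine hw (u1, ⟨(u2 : ℕ) + 1, by have := u2.isLt; omega⟩)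
    (v1, ⟨(v2 : ℕ) + 1, by have := v2.isLt; omega⟩) ?_
    (show (u2 : ℕ) + 1 ≤ (v2 : ℕ) + 1 + 1 by omega)
    (show (v2 : ℕ) + 1 ≤ (u2 : ℕ) + 1 + 1 by omega)
  intro e
  have e1 : u1 = v1 := congrArg Prod.fst e
  have e2 : (u2 : ℕ) + 1 = (v2 : ℕ) + 1 := congrArg (fun p => (p.2 : ℕ)) e
  refine h1 ?_
  rw [Prod.mk.injEq]
  exact ⟨e1, Fin.ext (by omega)⟩

lemma fin2_eq (r : Fin 2) : r = 0 ∨ r = 1 := by revert r; decide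

lemma extw_staircase {k n : ℕ} {x y : Fin k} {w : Fin 2 × Fin (n + 1) → Fin k}
    (hw : IsStaircase kingAdj w)
    (hxy : (x : ℕ) ≤ (y : ℕ) + 1 ∧ (y : ℕ) ≤ (x : ℕ) + 1)
    (hx0 : (x : ℕ) ≤ (w (0, 0) : ℕ) + 1 ∧ (w (0, 0) : ℕ) ≤ (x : ℕ) + 1)
    (hx1 : (x : ℕ) ≤ (w (1, 0) : ℕ) + 1 ∧ (w (1, 0) : ℕ) ≤ (x : ℕ) + 1)
    (hy0 : (y : ℕ) ≤ (w (0, 0) : ℕ) + 1 ∧ (w (0, 0) : ℕ) ≤ (y : ℕ) + 1)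
    (hy1 : (y : ℕ) ≤ (w (1, 0) : ℕ) + 1 ∧ (w (1, 0) : ℕ) ≤ (y : ℕ) + 1) :
    IsStaircase kingAdj (extw x y w) := by
  rw [king_char] at hw ⊢
  rintro ⟨u1, u2⟩ ⟨v1, v2⟩ h1 h2 h3
  replace h2 : (u2 : ℕ) ≤ (v2 : ℕ) + 1 := h2
  replace h3 : (v2 : ℕ) ≤ (u2 : ℕ) + 1 := h3
  have hu1 := u1.isLt; have hv1 := v1.isLt
  by_cases hu : (u2 : ℕ) = 0 <;> by_cases hv : (v2 : ℕ) = 0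
  · -- both in column 0
    rw [extw_col0 _ _ _ _ _ hu, extw_col0 _ _ _ _ _ hv]
    have hne : (u1 : ℕ) ≠ (v1 : ℕ) := by
      intro e
      refine h1 ?_
      rw [Prod.mk.injEq]
      exact ⟨Fin.ext e, Fin.ext (by omega)⟩
    by_cases h0 : (u1 : ℕ) = 0
    · rw [if_pos h0, if_neg (by omega)]; exact hxy
    · rw [if_neg h0, if_pos (by omega)]; exact ⟨hxy.2, hxy.1⟩
  · -- u in column 0, v in column 1
    have hv2 : (v2 : ℕ) = 1 := by omega
    rw [extw_col0 _ _ _ _ _ hu, extw_col _ _ _ _ _ (by omega)]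
    have e : (v1, (⟨(v2 : ℕ) - 1, by have := v2.isLt; omega⟩ : Fin (n + 1)))
        = (v1, (0 : Fin (n + 1))) := by
      exact Prod.ext rfl (Fin.ext (by simp [hv2]))
    rw [e]
    rcases fin2_eq v1 with h | h <;> subst h
    · by_cases h0 : (u1 : ℕ) = 0
      · rw [if_pos h0]; exact hx0
      · rw [if_neg h0]; exact hy0
    · by_cases h0 : (u1 : ℕ) = 0
      · rw [if_pos h0]; exact hx1
      · rw [if_neg h0]; exact hy1
  · -- v in column 0, u in column 1
    have hu2 : (u2 : ℕ) = 1 := by omega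
    rw [extw_col0 _ _ _ _ _ hv, extw_col _ _ _ _ _ (by omega)]
    have e : (u1, (⟨(u2 : ℕ) - 1, by have := u2.isLt; omega⟩ : Fin (n + 1)))
        = (u1, (0 : Fin (n + 1))) := by
      exact Prod.ext rfl (Fin.ext (by simp [hu2]))
    rw [e]
    rcases fin2_eq u1 with h | h <;> subst h
    · by_cases h0 : (v1 : ℕ) = 0
      · rw [if_pos h0]; exact ⟨hx0.2, hx0.1⟩
      · rw [if_neg h0]; exact ⟨hy0.2, hy0.1⟩
    · by_cases h0 : (v1 : ℕ) = 0
      · rw [if_pos h0]; exact ⟨hx1.2, hx1.1⟩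
      · rw [if_neg h0]; exact ⟨hy1.2, hy1.1⟩
  · -- both in columns ≥ 1
    rw [extw_col _ _ _ _ _ hu, extw_col _ _ _ _ _ hv]
    refine hw (u1, ⟨(u2 : ℕ) - 1, by have := u2.isLt; omega⟩)
      (v1, ⟨(v2 : ℕ) - 1, by have := v2.isLt; omega⟩) ?_
      (show (u2 : ℕ) - 1 ≤ (v2 : ℕ) - 1 + 1 by omega)
      (show (v2 : ℕ) - 1 ≤ (u2 : ℕ) - 1 + 1 by omega)
    intro e
    have e1 : u1 = v1 := congrArg Prod.fst e
    have e2 : (u2 : ℕ) - 1 = (v2 : ℕ) - 1 := congrArg (fun p => (p.2 : ℕ)) e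
    refine h1 ?_
    rw [Prod.mk.injEq]
    exact ⟨e1, Fin.ext (by omega)⟩

lemma card_fixed (k n a b c d : ℕ)
    (hc1 : 1 ≤ c) (hck : c ≤ k) (hd1 : 1 ≤ d) (hdk : d ≤ k)
    (hcd : c ≤ d + 1 ∧ d ≤ c + 1)
    (hca : c ≤ a + 1 ∧ a ≤ c + 1) (hcb : c ≤ b + 1 ∧ b ≤ c + 1)
    (hda : d ≤ a + 1 ∧ a ≤ d + 1) (hdb : d ≤ b + 1 ∧ b ≤ d + 1) :
    Nat.card {w : Fin 2 × Fin (n + 1 + 1) → Fin k //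
      IsStaircase kingAdj w ∧ ((w (0, 0) : ℕ) + 1 = c) ∧ ((w (1, 0) : ℕ) + 1 = d)
        ∧ ((w (0, 1) : ℕ) + 1 = a) ∧ ((w (1, 1) : ℕ) + 1 = b)} =
    scountIJ k n kingAdj a b := by
  have e01 : ((0 : Fin 2), (1 : Fin (n + 1 + 1)))
      = ((0 : Fin 2), (⟨1, by omega⟩ : Fin (n + 1 + 1))) :=
    Prod.ext rfl (Fin.ext (by simp))
  have e11 : ((1 : Fin 2), (1 : Fin (n + 1 + 1)))
      = ((1 : Fin 2), (⟨1, by omega⟩ : Fin (n + 1 + 1))) :=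
    Prod.ext rfl (Fin.ext (by simp))
  apply Nat.card_congr
  refine ⟨fun w => ⟨dropw w.1, dropw_staircase w.2.1, ?_, ?_⟩,
    fun w => ⟨extw ⟨c - 1, by omega⟩ ⟨d - 1, by omega⟩ w.1, ?_, ?_, ?_, ?_, ?_⟩,
    fun w => Subtype.ext (funext fun p => ?_), fun w => Subtype.ext (funext fun p => ?_)⟩
  · show (w.1 ((0 : Fin 2), ⟨0 + 1, _⟩) : ℕ) + 1 = a
    rw [show ((0 : Fin 2), (⟨0 + 1, by omega⟩ : Fin (n + 1 + 1)))
      = ((0 : Fin 2), (1 : Fin (n + 1 + 1))) from Prod.ext rfl (Fin.ext (by simp))]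
    exact w.2.2.2.2.1
  · show (w.1 ((1 : Fin 2), ⟨0 + 1, _⟩) : ℕ) + 1 = b
    rw [show ((1 : Fin 2), (⟨0 + 1, by omega⟩ : Fin (n + 1 + 1)))
      = ((1 : Fin 2), (1 : Fin (n + 1 + 1))) from Prod.ext rfl (Fin.ext (by simp))]
    exact w.2.2.2.2.2
  · -- staircase of extension
    refine extw_staircase w.2.1 ?_ ?_ ?_ ?_ ?_
    · exact ⟨show c - 1 ≤ d - 1 + 1 by omega, show d - 1 ≤ c - 1 + 1 by omega⟩
    · have ha := w.2.2.1
      exact ⟨show c - 1 ≤ (w.1 (0, 0) : ℕ) + 1 by omega,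
        show (w.1 (0, 0) : ℕ) ≤ c - 1 + 1 by omega⟩
    · have hb := w.2.2.2
      exact ⟨show c - 1 ≤ (w.1 (1, 0) : ℕ) + 1 by omega,
        show (w.1 (1, 0) : ℕ) ≤ c - 1 + 1 by omega⟩
    · have ha := w.2.2.1
      exact ⟨show d - 1 ≤ (w.1 (0, 0) : ℕ) + 1 by omega,
        show (w.1 (0, 0) : ℕ) ≤ d - 1 + 1 by omega⟩
    · have hb := w.2.2.2
      exact ⟨show d - 1 ≤ (w.1 (1, 0) : ℕ) + 1 by omega,
        show (w.1 (1, 0) : ℕ) ≤ d - 1 + 1 by omega⟩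
  · rw [extw_col0 _ _ _ _ _ (by simp), if_pos (by simp)]
    show c - 1 + 1 = c
    omega
  · rw [extw_col0 _ _ _ _ _ (by simp), if_neg (by simp)]
    show d - 1 + 1 = d
    omega
  · rw [e01, extw_col _ _ _ _ _ (by simp)]
    rw [show ((0 : Fin 2), (⟨1 - 1, by omega⟩ : Fin (n + 1)))
      = ((0 : Fin 2), (0 : Fin (n + 1))) from Prod.ext rfl (Fin.ext (by simp))]
    exact w.2.2.1
  · rw [e11, extw_col _ _ _ _ _ (by simp)]
    rw [show ((1 : Fin 2), (⟨1 - 1, by omega⟩ : Fin (n + 1)))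
      = ((1 : Fin 2), (0 : Fin (n + 1))) from Prod.ext rfl (Fin.ext (by simp))]
    exact w.2.2.2
  · -- extw (dropw w) = w
    obtain ⟨r, q⟩ := p
    show extw (⟨c - 1, by omega⟩ : Fin k) (⟨d - 1, by omega⟩ : Fin k) (dropw w.1) (r, q)
      = w.1 (r, q)
    by_cases hq : (q : ℕ) = 0
    · rw [extw_col0 _ _ _ _ _ hq]
      have eq0 : q = 0 := Fin.ext (by simp [hq])
      subst eq0
      rcases fin2_eq r with h | h <;> subst h
      · rw [if_pos (by simp)]
        have := w.2.2.1
        refine Fin.ext ?_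
        show c - 1 = (w.1 (0, 0) : ℕ)
        omega
      · rw [if_neg (by simp)]
        have := w.2.2.2.1
        refine Fin.ext ?_
        show d - 1 = (w.1 (1, 0) : ℕ)
        omega
    · rw [extw_col _ _ _ _ _ hq]
      show w.1 (r, ⟨(q : ℕ) - 1 + 1, _⟩) = w.1 (r, q)
      refine congrArg w.1 ?_
      rw [Prod.mk.injEq]
      exact ⟨rfl, Fin.ext (by simp; omega)⟩
  · -- dropw (extw w) = w
    obtain ⟨r, q⟩ := p
    show extw (⟨c - 1, by omega⟩ : Fin k) (⟨d - 1, by omega⟩ : Fin k) w.1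
      (r, ⟨(q : ℕ) + 1, by have := q.isLt; omega⟩) = w.1 (r, q)
    rw [extw_col _ _ _ _ _ (by simp)]
    refine congrArg w.1 ?_
    rw [Prod.mk.injEq]
    exact ⟨rfl, Fin.ext (by simp)⟩

def rsw {n : ℕ} (p : Fin 2 × Fin n) : Fin 2 × Fin n :=
  (⟨1 - (p.1 : ℕ), by omega⟩, p.2)

lemma rsw_invol {n : ℕ} (p : Fin 2 × Fin n) : rsw (rsw p) = p := by
  obtain ⟨r, c⟩ := p
  have := r.isLt
  refine Prod.ext ?_ rfl
  show (⟨1 - (1 - (r : ℕ)), by omega⟩ : Fin 2) = r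
  exact Fin.ext (by simp; omega)

lemma rsw_staircase {k n : ℕ} {w : Fin 2 × Fin n → Fin k}
    (hw : IsStaircase kingAdj w) : IsStaircase kingAdj (w ∘ rsw) := by
  rw [king_char] at hw ⊢
  intro u v h1 h2 h3
  refine hw (rsw u) (rsw v) ?_ h2 h3
  intro e
  have := congrArg rsw e
  rw [rsw_invol, rsw_invol] at this
  exact h1 this

lemma scountIJ_swap (k n a b : ℕ) :
    scountIJ k n kingAdj a b = scountIJ k n kingAdj b a := by
  have e0 : rsw ((0 : Fin 2), (0 : Fin (n + 1))) = ((1 : Fin 2), (0 : Fin (n + 1))) :=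
    Prod.ext (Fin.ext (by simp [rsw])) rfl
  have e1 : rsw ((1 : Fin 2), (0 : Fin (n + 1))) = ((0 : Fin 2), (0 : Fin (n + 1))) :=
    Prod.ext (Fin.ext (by simp [rsw])) rfl
  apply Nat.card_congr
  refine ⟨fun w => ⟨w.1 ∘ rsw, rsw_staircase w.2.1, ?_, ?_⟩,
    fun w => ⟨w.1 ∘ rsw, rsw_staircase w.2.1, ?_, ?_⟩,
    fun w => Subtype.ext (funext fun p => ?_), fun w => Subtype.ext (funext fun p => ?_)⟩
  · show (w.1 (rsw (0, 0)) : ℕ) + 1 = b; rw [e0]; exact w.2.2.2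
  · show (w.1 (rsw (1, 0)) : ℕ) + 1 = a; rw [e1]; exact w.2.2.1
  · show (w.1 (rsw (0, 0)) : ℕ) + 1 = a; rw [e0]; exact w.2.2.2
  · show (w.1 (rsw (1, 0)) : ℕ) + 1 = b; rw [e1]; exact w.2.2.1
  · show w.1 (rsw (rsw p)) = w.1 p; rw [rsw_invol]
  · show w.1 (rsw (rsw p)) = w.1 p; rw [rsw_invol]

lemma card_split_pred {α : Type*} [Finite α] (P Q : α → Prop) :
    Nat.card {x // P x} = Nat.card {x // P x ∧ Q x} + Nat.card {x // P x ∧ ¬ Q x} := by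
  classical
  rw [← Nat.card_congr (Equiv.sumCompl (fun x : {x // P x} => Q x.1)), Nat.card_sum,
    Nat.card_congr (Equiv.subtypeSubtypeEquivSubtypeInter P Q),
    Nat.card_congr (Equiv.subtypeSubtypeEquivSubtypeInter P (fun x => ¬ Q x))]

lemma col1_mem {k n i : ℕ} {w : Fin 2 × Fin (n + 1 + 1) → Fin k}
    (hw : IsStaircase kingAdj w) (h0 : (w (0, 0) : ℕ) + 1 = i + 1)
    (h1 : (w (1, 0) : ℕ) + 1 = i) (r : Fin 2) :
    (w (r, 1) : ℕ) + 1 = i ∨ (w (r, 1) : ℕ) + 1 = i + 1 := by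
  rw [king_char] at hw
  have hA := hw (0, 0) (r, 1) (fun e => by
      have := congrArg (fun p => (p.2 : ℕ)) e; simp at this)
    (by simp) (by simp)
  have hB := hw (1, 0) (r, 1) (fun e => by
      have := congrArg (fun p => (p.2 : ℕ)) e; simp at this)
    (by simp) (by simp)
  omega

lemma card_fixed' (k n a b i : ℕ) (hi : 1 ≤ i) (hik : i + 1 ≤ k)
    (ha1 : i ≤ a) (ha2 : a ≤ i + 1) (hb1 : i ≤ b) (hb2 : b ≤ i + 1) :
    Nat.card {w : Fin 2 × Fin (n + 1 + 1) → Fin k //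
      IsStaircase kingAdj w ∧ ((w (0, 0) : ℕ) + 1 = i + 1) ∧ ((w (1, 0) : ℕ) + 1 = i)
        ∧ ((w (0, 1) : ℕ) + 1 = a) ∧ ((w (1, 1) : ℕ) + 1 = b)} =
    scountIJ k n kingAdj a b :=
  card_fixed k n a b (i + 1) i (by omega) (by omega) (by omega) (by omega)
    ⟨by omega, by omega⟩ ⟨by omega, by omega⟩ ⟨by omega, by omega⟩
    ⟨by omega, by omega⟩ ⟨by omega, by omega⟩

def Pbig (k n i : ℕ) (w : Fin 2 × Fin (n + 1 + 1) → Fin k) : Prop :=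
  IsStaircase kingAdj w ∧ ((w (0, 0) : ℕ) + 1 = i + 1) ∧ ((w (1, 0) : ℕ) + 1 = i)

theorem king_rec_offdiag (k n i : ℕ) (hi : 1 ≤ i) (hik : i + 1 ≤ k) :
    scountIJ k (n + 1) kingAdj (i + 1) i =
      scountIJ k n kingAdj i i + 2 * scountIJ k n kingAdj (i + 1) i
        + scountIJ k n kingAdj (i + 1) (i + 1) := by
  have hca1 := card_fixed' k n i i i hi hik (le_refl i) (Nat.le_succ i) (le_refl i)
      (Nat.le_succ i)
  have hca2 := card_fixed' k n i (i + 1) i hi hik (le_refl i) (Nat.le_succ i) (Nat.le_succ i)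
      (le_refl (i + 1))
  have hca3 := card_fixed' k n (i + 1) i i hi hik (Nat.le_succ i) (le_refl (i + 1)) (le_refl i)
      (Nat.le_succ i)
  have hca4 := card_fixed' k n (i + 1) (i + 1) i hi hik (Nat.le_succ i) (le_refl (i + 1))
      (Nat.le_succ i) (le_refl (i + 1))
  have key : scountIJ k (n + 1) kingAdj (i + 1) i
      = Nat.card {w : Fin 2 × Fin (n + 1 + 1) → Fin k // Pbig k n i w} := rfl
  have step1 : Nat.card {w : Fin 2 × Fin (n + 1 + 1) → Fin k //
        Pbig k n i w ∧ ¬ ((w (0, 1) : ℕ) + 1 = i)}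
      = Nat.card {w : Fin 2 × Fin (n + 1 + 1) → Fin k //
        Pbig k n i w ∧ ((w (0, 1) : ℕ) + 1 = i + 1)} :=
    Nat.card_congr (Equiv.subtypeEquivRight (fun w =>
      ⟨fun hpq => ⟨hpq.1, (col1_mem hpq.1.1 hpq.1.2.1 hpq.1.2.2 0).resolve_left hpq.2⟩,
       fun hpq => ⟨hpq.1, fun hcon => Nat.succ_ne_self i (hpq.2.symm.trans hcon)⟩⟩))
  have step2 : Nat.card {w : Fin 2 × Fin (n + 1 + 1) → Fin k //
        (Pbig k n i w ∧ ((w (0, 1) : ℕ) + 1 = i)) ∧ ¬ ((w (1, 1) : ℕ) + 1 = i)}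
      = Nat.card {w : Fin 2 × Fin (n + 1 + 1) → Fin k //
        (Pbig k n i w ∧ ((w (0, 1) : ℕ) + 1 = i)) ∧ ((w (1, 1) : ℕ) + 1 = i + 1)} :=
    Nat.card_congr (Equiv.subtypeEquivRight (fun w =>
      ⟨fun hpq => ⟨hpq.1, (col1_mem hpq.1.1.1 hpq.1.1.2.1 hpq.1.1.2.2 1).resolve_left hpq.2⟩,
       fun hpq => ⟨hpq.1, fun hcon => Nat.succ_ne_self i (hpq.2.symm.trans hcon)⟩⟩))
  have step3 : Nat.card {w : Fin 2 × Fin (n + 1 + 1) → Fin k //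
        (Pbig k n i w ∧ ((w (0, 1) : ℕ) + 1 = i + 1)) ∧ ¬ ((w (1, 1) : ℕ) + 1 = i)}
      = Nat.card {w : Fin 2 × Fin (n + 1 + 1) → Fin k //
        (Pbig k n i w ∧ ((w (0, 1) : ℕ) + 1 = i + 1)) ∧ ((w (1, 1) : ℕ) + 1 = i + 1)} :=
    Nat.card_congr (Equiv.subtypeEquivRight (fun w =>
      ⟨fun hpq => ⟨hpq.1, (col1_mem hpq.1.1.1 hpq.1.1.2.1 hpq.1.1.2.2 1).resolve_left hpq.2⟩,
       fun hpq => ⟨hpq.1, fun hcon => Nat.succ_ne_self i (hpq.2.symm.trans hcon)⟩⟩))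
  have flat : ∀ a b : ℕ, Nat.card {w : Fin 2 × Fin (n + 1 + 1) → Fin k //
        (Pbig k n i w ∧ ((w (0, 1) : ℕ) + 1 = a)) ∧ ((w (1, 1) : ℕ) + 1 = b)}
      = Nat.card {w : Fin 2 × Fin (n + 1 + 1) → Fin k //
        IsStaircase kingAdj w ∧ ((w (0, 0) : ℕ) + 1 = i + 1)
        ∧ ((w (1, 0) : ℕ) + 1 = i) ∧ ((w (0, 1) : ℕ) + 1 = a) ∧ ((w (1, 1) : ℕ) + 1 = b)} :=
    fun a b => Nat.card_congr (Equiv.subtypeEquivRight (fun w =>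
      ⟨fun h => ⟨h.1.1.1, h.1.1.2.1, h.1.1.2.2, h.1.2, h.2⟩,
       fun h => ⟨⟨⟨h.1, h.2.1, h.2.2.1⟩, h.2.2.2.1⟩, h.2.2.2.2⟩⟩))
  rw [key]
  rw [card_split_pred (Pbig k n i) (fun w => (w (0, 1) : ℕ) + 1 = i)]
  rw [step1]
  rw [card_split_pred (fun w : Fin 2 × Fin (n + 1 + 1) → Fin k =>
      Pbig k n i w ∧ ((w (0, 1) : ℕ) + 1 = i)) (fun w => (w (1, 1) : ℕ) + 1 = i)]
  rw [card_split_pred (fun w : Fin 2 × Fin (n + 1 + 1) → Fin k =>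
      Pbig k n i w ∧ ((w (0, 1) : ℕ) + 1 = i + 1)) (fun w => (w (1, 1) : ℕ) + 1 = i)]
  rw [step2, step3]
  rw [flat i i, flat i (i + 1), flat (i + 1) i, flat (i + 1) (i + 1)]
  rw [hca1, hca2, hca3, hca4]
  rw [scountIJ_swap k n i (i + 1)]
  ring
end

section
/- For the grid graph and n ≥ 2, the number of staircase words over [k] with first column (i+1,i) (for 1 ≤ i ≤ k-1) satisfies: s_k(P_2×P_n, i+1, i) = s_k(P_2×P_{n-1}, i, i-1) + s_k(P_2×P_{n-1}, i, i) + 2·s_k(P_2×P_{n-1}, i+1, i) + s_k(P_2×P_{n-1}, i+1, i+1) + s_k(P_2×P_{n-1}, i+2, i+1), where terms with indices outside [k] are 0. -/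
lemma gridAdj_iff {m : ℕ} (u v : Fin 2 × Fin m) :
    gridAdj u v ↔ (u.1 = v.1 ∧ ((u.2 : ℤ) - v.2 = 1 ∨ (v.2 : ℤ) - u.2 = 1))
      ∨ (u.2 = v.2 ∧ u.1 ≠ v.1) := by
  have h1 := u.1.is_lt
  have h2 := v.1.is_lt
  simp only [gridAdj, Fin.ext_iff, ne_eq]
  rcases abs_cases ((u.1 : ℤ) - v.1) with ⟨e1, e1'⟩ | ⟨e1, e1'⟩ <;>
    rcases abs_cases ((u.2 : ℤ) - v.2) with ⟨e2, e2'⟩ | ⟨e2, e2'⟩ <;>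
    rw [e1, e2] <;> omega


lemma fin2_cases (x : Fin 2) : x = 0 ∨ x = 1 := by
  have h := x.is_lt
  rcases (by omega : (x : ℕ) = 0 ∨ (x : ℕ) = 1) with e | e <;> [left; right] <;> exact Fin.ext e

def restr {k n : ℕ} (w : Fin 2 × Fin (n + 2) → Fin k) (p : Fin 2 × Fin (n + 1)) : Fin k :=
  w (p.1, p.2.succ)




lemma stair_restr {k n : ℕ} (w : Fin 2 × Fin (n + 2) → Fin k) (hw : IsStaircase gridAdj w) :
    IsStaircase gridAdj (restr w) := by
  rintro ⟨x1, j1⟩ ⟨x2, j2⟩ hadj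
  apply hw (x1, j1.succ) (x2, j2.succ)
  rw [gridAdj_iff] at hadj ⊢
  rcases hadj with ⟨h, e | e⟩ | ⟨e, h⟩
  · exact Or.inl ⟨h, Or.inl (by push_cast [Fin.val_succ] at e ⊢; omega)⟩
  · exact Or.inl ⟨h, Or.inr (by push_cast [Fin.val_succ] at e ⊢; omega)⟩
  · exact Or.inr ⟨congrArg Fin.succ e, h⟩

lemma grid_edge_col0 {m : ℕ} : gridAdj ((0 : Fin 2), (0 : Fin (m + 1))) ((1 : Fin 2), (0 : Fin (m + 1))) := by
  rw [gridAdj_iff]; refine Or.inr ⟨rfl, ?_⟩; show (0 : Fin 2) ≠ (1 : Fin 2); decide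

lemma grid_edge_row {m : ℕ} (x : Fin 2) :
    gridAdj (x, (0 : Fin (m + 2))) (x, (0 : Fin (m + 1)).succ) := by
  rw [gridAdj_iff]
  exact Or.inl ⟨rfl, Or.inr (by simp)⟩


section main
variable (k n i : ℕ) (hi : 1 ≤ i) (hik : i + 1 ≤ k)
include hi hik

def prep (w : Fin 2 × Fin (n + 1) → Fin k) (p : Fin 2 × Fin (n + 2)) : Fin k :=
  Fin.cases (if p.1 = 0 then ⟨i, by omega⟩ else ⟨i - 1, by omega⟩)
    (fun j' => w (p.1, j')) p.2

lemma prep_succ (w : Fin 2 × Fin (n + 1) → Fin k) (x : Fin 2) (j : Fin (n + 1)) :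
    prep k n i hi hik w (x, j.succ) = w (x, j) := rfl

lemma prep_00 (w : Fin 2 × Fin (n + 1) → Fin k) :
    ((prep k n i hi hik w ((0 : Fin 2), (0 : Fin (n + 2)))) : ℕ) = i := by
  simp [prep]

lemma prep_10 (w : Fin 2 × Fin (n + 1) → Fin k) :
    ((prep k n i hi hik w ((1 : Fin 2), (0 : Fin (n + 2)))) : ℕ) = i - 1 := by
  simp [prep]


lemma stair_prep (w : Fin 2 × Fin (n + 1) → Fin k) (hw : IsStaircase gridAdj w)
    (h0 : |((w (0, 0) : ℕ) : ℤ) - i| ≤ 1) (h1 : |((w (1, 0) : ℕ) : ℤ) - ((i : ℤ) - 1)| ≤ 1) :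
    IsStaircase gridAdj (prep k n i hi hik w) := by
  rintro ⟨x1, j1⟩ ⟨x2, j2⟩ hadj
  rw [gridAdj_iff] at hadj
  rw [abs_le] at h0 h1 ⊢
  induction j1 using Fin.cases with
  | zero =>
    induction j2 using Fin.cases with
    | zero =>
      rcases fin2_cases x1 with rfl | rfl <;> rcases fin2_cases x2 with rfl | rfl <;>
        simp only [prep_00, prep_10] <;> omega
    | succ j2' =>
      have hx : x1 = x2 ∧ (j2' : ℕ) = 0 := by
        rcases hadj with ⟨h, e | e⟩ | ⟨e, h⟩ <;>
          simp only [Fin.ext_iff, Fin.val_succ, Fin.val_zero] at * <;>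
          push_cast at e <;> exact ⟨by omega, by omega⟩
      obtain ⟨rfl, hj0⟩ := hx
      rw [show j2' = (0 : Fin (n+1)) from Fin.ext hj0, prep_succ]
      rcases fin2_cases x1 with rfl | rfl <;> simp only [prep_00, prep_10] <;> omega
  | succ j1' =>
    induction j2 using Fin.cases with
    | zero =>
      have hx : x1 = x2 ∧ (j1' : ℕ) = 0 := by
        rcases hadj with ⟨h, e | e⟩ | ⟨e, h⟩ <;>
          simp only [Fin.ext_iff, Fin.val_succ, Fin.val_zero] at * <;>
          push_cast at e <;> exact ⟨by omega, by omega⟩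
      obtain ⟨rfl, hj0⟩ := hx
      rw [show j1' = (0 : Fin (n+1)) from Fin.ext hj0, prep_succ]
      rcases fin2_cases x1 with rfl | rfl <;> simp only [prep_00, prep_10] <;> omega
    | succ j2' =>
      rw [prep_succ, prep_succ, ← abs_le]
      apply hw (x1, j1') (x2, j2')
      rw [gridAdj_iff]
      rcases hadj with ⟨h, e | e⟩ | ⟨e, h⟩
      · exact Or.inl ⟨h, Or.inl (by push_cast [Fin.val_succ] at e ⊢; omega)⟩
      · exact Or.inl ⟨h, Or.inr (by push_cast [Fin.val_succ] at e ⊢; omega)⟩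
      · exact Or.inr ⟨Fin.succ_injective _ e, h⟩


lemma card_ST :
    Nat.card {w : Fin 2 × Fin (n + 2) → Fin k //
        IsStaircase gridAdj w ∧ ((w (0, 0) : ℕ) + 1 = i + 1) ∧ ((w (1, 0) : ℕ) + 1 = i)} =
      Nat.card {w : Fin 2 × Fin (n + 1) → Fin k //
        IsStaircase gridAdj w ∧ |((w (0, 0) : ℕ) : ℤ) - i| ≤ 1
          ∧ |((w (1, 0) : ℕ) : ℤ) - ((i : ℤ) - 1)| ≤ 1} := by
  apply Nat.card_congr
  refine ⟨fun w => ⟨restr w.1, stair_restr w.1 w.2.1, ?_, ?_⟩,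
    fun w => ⟨prep k n i hi hik w.1, stair_prep k n i hi hik w.1 w.2.1 w.2.2.1 w.2.2.2, ?_, ?_⟩,
    ?_, ?_⟩
  · have h := w.2.1 _ _ (grid_edge_row (m := n) 0)
    have h00 := w.2.2.1
    show |((w.1 ((0 : Fin 2), (0 : Fin (n + 1)).succ) : ℕ) : ℤ) - i| ≤ 1
    rw [abs_le] at h ⊢
    omega
  · have h := w.2.1 _ _ (grid_edge_row (m := n) 1)
    have h10 := w.2.2.2
    show |((w.1 ((1 : Fin 2), (0 : Fin (n + 1)).succ) : ℕ) : ℤ) - ((i : ℤ) - 1)| ≤ 1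
    rw [abs_le] at h ⊢
    omega
  · rw [prep_00]
  · rw [prep_10]; omega
  · rintro ⟨w, hw, h0, h1⟩
    ext ⟨x, j⟩
    simp only
    induction j using Fin.cases with
    | zero =>
      rcases fin2_cases x with rfl | rfl
      · rw [prep_00]; omega
      · rw [prep_10]; omega
    | succ j' => rfl
  · rintro ⟨w, hw⟩
    ext ⟨x, j⟩
    rfl

end main

lemma card_or {α : Type*} [Finite α] (P Q : α → Prop) (h : ∀ a, P a → Q a → False) :
    Nat.card {x // P x ∨ Q x} = Nat.card {x // P x} + Nat.card {x // Q x} := by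
  classical
  rw [← Nat.card_sum]
  refine Nat.card_congr (subtypeOrEquiv P Q ?_)
  rw [Pi.disjoint_iff]
  intro a
  rw [Prop.disjoint_iff]
  exact fun hpq => h a hpq.1 hpq.2


lemma rev_abs : ∀ x y : Fin 2, |((x.rev : ℕ) : ℤ) - ((y.rev : ℕ) : ℤ)| = |(x : ℤ) - (y : ℤ)| := by
  decide

lemma stair_rev {k m : ℕ} (w : Fin 2 × Fin m → Fin k) (h : IsStaircase gridAdj w) :
    IsStaircase gridAdj (fun p => w (p.1.rev, p.2)) := by
  intro u v huv
  exact h (u.1.rev, u.2) (v.1.rev, v.2) (by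
    simp only [gridAdj] at huv ⊢
    rw [rev_abs]; exact huv)

lemma scountIJ_symm (k n a b : ℕ) :
    scountIJ k n gridAdj a b = scountIJ k n gridAdj b a := by
  unfold scountIJ
  apply Nat.card_congr
  refine ⟨fun w => ⟨fun p => w.1 (p.1.rev, p.2), stair_rev _ w.2.1, ?_, ?_⟩,
    fun w => ⟨fun p => w.1 (p.1.rev, p.2), stair_rev _ w.2.1, ?_, ?_⟩, ?_, ?_⟩
  · simpa using w.2.2.2
  · simpa using w.2.2.1
  · simpa using w.2.2.2
  · simpa using w.2.2.1
  · intro w; ext p; simp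
  · intro w; ext p; simp

lemma card_or6 {α : Type*} [Finite α] (P1 P2 P3 P4 P5 P6 : α → Prop)
    (h1 : ∀ a, P1 a → (P2 a ∨ P3 a ∨ P4 a ∨ P5 a ∨ P6 a) → False)
    (h2 : ∀ a, P2 a → (P3 a ∨ P4 a ∨ P5 a ∨ P6 a) → False)
    (h3 : ∀ a, P3 a → (P4 a ∨ P5 a ∨ P6 a) → False)
    (h4 : ∀ a, P4 a → (P5 a ∨ P6 a) → False)
    (h5 : ∀ a, P5 a → P6 a → False) :
    Nat.card {x // P1 x ∨ P2 x ∨ P3 x ∨ P4 x ∨ P5 x ∨ P6 x}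
      = Nat.card {x // P1 x} + (Nat.card {x // P2 x} + (Nat.card {x // P3 x}
        + (Nat.card {x // P4 x} + (Nat.card {x // P5 x} + Nat.card {x // P6 x})))) := by
  rw [card_or _ _ h1, card_or _ _ h2, card_or _ _ h3, card_or _ _ h4, card_or _ _ h5]

lemma card_T (k n i : ℕ) (hi : 1 ≤ i) :
    Nat.card {w : Fin 2 × Fin (n + 1) → Fin k //
        IsStaircase gridAdj w ∧ |((w (0, 0) : ℕ) : ℤ) - i| ≤ 1
          ∧ |((w (1, 0) : ℕ) : ℤ) - ((i : ℤ) - 1)| ≤ 1}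
      = scountIJ k n gridAdj i (i - 1) + (scountIJ k n gridAdj i i
        + (scountIJ k n gridAdj i (i + 1) + (scountIJ k n gridAdj (i + 1) i
        + (scountIJ k n gridAdj (i + 1) (i + 1) + scountIJ k n gridAdj (i + 2) (i + 1))))) := by
  have hiff : ∀ w : Fin 2 × Fin (n + 1) → Fin k,
      (IsStaircase gridAdj w ∧ |((w (0, 0) : ℕ) : ℤ) - i| ≤ 1
          ∧ |((w (1, 0) : ℕ) : ℤ) - ((i : ℤ) - 1)| ≤ 1)
      ↔ ((IsStaircase gridAdj w ∧ ((w (0, 0) : ℕ) + 1 = i) ∧ ((w (1, 0) : ℕ) + 1 = i - 1))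
        ∨ ((IsStaircase gridAdj w ∧ ((w (0, 0) : ℕ) + 1 = i) ∧ ((w (1, 0) : ℕ) + 1 = i))
        ∨ ((IsStaircase gridAdj w ∧ ((w (0, 0) : ℕ) + 1 = i) ∧ ((w (1, 0) : ℕ) + 1 = i + 1))
        ∨ ((IsStaircase gridAdj w ∧ ((w (0, 0) : ℕ) + 1 = i + 1) ∧ ((w (1, 0) : ℕ) + 1 = i))
        ∨ ((IsStaircase gridAdj w ∧ ((w (0, 0) : ℕ) + 1 = i + 1) ∧ ((w (1, 0) : ℕ) + 1 = i + 1))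
        ∨ (IsStaircase gridAdj w ∧ ((w (0, 0) : ℕ) + 1 = i + 2) ∧ ((w (1, 0) : ℕ) + 1 = i + 1))))))) := by
    intro w
    constructor
    · rintro ⟨hs, h0, h1⟩
      have hd := hs (0, 0) (1, 0) grid_edge_col0
      rw [abs_le] at h0 h1 hd
      have hnum : (((w (0, 0) : ℕ) + 1 = i) ∧ ((w (1, 0) : ℕ) + 1 = i - 1))
          ∨ ((((w (0, 0) : ℕ) + 1 = i) ∧ ((w (1, 0) : ℕ) + 1 = i))
          ∨ ((((w (0, 0) : ℕ) + 1 = i) ∧ ((w (1, 0) : ℕ) + 1 = i + 1))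
          ∨ ((((w (0, 0) : ℕ) + 1 = i + 1) ∧ ((w (1, 0) : ℕ) + 1 = i))
          ∨ ((((w (0, 0) : ℕ) + 1 = i + 1) ∧ ((w (1, 0) : ℕ) + 1 = i + 1))
          ∨ (((w (0, 0) : ℕ) + 1 = i + 2) ∧ ((w (1, 0) : ℕ) + 1 = i + 1)))))) := by
        omega
      tauto
    · rintro (h | h | h | h | h | h) <;> obtain ⟨hs, h1, h2⟩ := h <;>
        refine ⟨hs, ?_, ?_⟩ <;> rw [abs_le] <;> omega
  rw [Nat.card_congr (Equiv.subtypeEquivRight hiff)]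
  rw [card_or6]
  · rfl
  all_goals {
    rintro w ⟨_, a1, a2⟩ hb
    casesm* _ ∨ _, _ ∧ _ <;> omega }

theorem grid_rec_offdiag (k n i : ℕ) (hi : 1 ≤ i) (hik : i + 1 ≤ k) :
    scountIJ k (n + 1) gridAdj (i + 1) i =
      scountIJ k n gridAdj i (i - 1) + scountIJ k n gridAdj i i
        + 2 * scountIJ k n gridAdj (i + 1) i + scountIJ k n gridAdj (i + 1) (i + 1)
        + scountIJ k n gridAdj (i + 2) (i + 1) := by
  have hS : scountIJ k (n + 1) gridAdj (i + 1) i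
      = Nat.card {w : Fin 2 × Fin (n + 2) → Fin k //
          IsStaircase gridAdj w ∧ ((w (0, 0) : ℕ) + 1 = i + 1) ∧ ((w (1, 0) : ℕ) + 1 = i)} := rfl
  rw [hS, card_ST k n i hi hik, card_T k n i hi, scountIJ_symm k n i (i + 1)]
  ring
end
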